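/- Let M ∈ ℝ^{n×n} be a symmetric positive definite matrix, and let D : [t_a, t_b] → ℝ^{n×n} be continuous with sym(M D(t)) positive semidefinite for all t ∈ [t_a, t_b]. Let Γ(t) solve the matrix ODE Γ'(t) = −D(t) Γ(t) with Γ(t_a) = I. Then Γ(t) is invertible for all t ∈ [t_a, t_b], and both Γ(t)ᵀ M Γ(t) − M ⪯ 0 and M − Γ(t)⁻ᵀ M Γ(t)⁻¹ ⪯ 0 hold in the Loewner order. -/

import Mathlib

open Matrix

attribute [local instance] Matrix.normedAddCommGroup Matrix.normedSpace

noncomputable def symPart {m : Type*} [Fintype m] (A : Matrix m m ℝ) : Matrix m m ℝ :=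
  (1/2 : ℝ) • (A + Aᵀ)

def NegSemidef {m : Type*} [Fintype m] (A : Matrix m m ℝ) : Prop :=
  Aᵀ = A ∧ ∀ x : m → ℝ, x ⬝ᵥ A.mulVec x ≤ 0

/-! Along a solution `u = Γ x` of `u' = -D u` the energy `uᵀ M u` has derivative
`-2 uᵀ sym(M D) u ≤ 0`, so it stays below its initial value `xᵀ M x`: this is `Γᵀ M Γ ⪯ M`, and
conjugating by `Γ⁻¹` gives `M ⪯ Γ⁻ᵀ M Γ⁻¹`. `Γ(t)` is invertible because a solution vanishing at
time `t` vanishes at `t_a` by backward uniqueness for the linear ODE, whose right-hand side is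
uniformly Lipschitz since `D` is bounded on the compact interval. -/

open Set

section

variable {m : Type*} [Fintype m]

theorem negSemidef_iff_posSemidef_neg {A : Matrix m m ℝ} : NegSemidef A ↔ (-A).PosSemidef := by
  simp only [NegSemidef, posSemidef_iff_dotProduct_mulVec, isHermitian_iff_isSymm, IsSymm,
    transpose_neg, neg_inj, star_trivial, neg_mulVec, dotProduct_neg, neg_nonneg]

theorem dotProduct_symPart_mulVec (A : Matrix m m ℝ) (x : m → ℝ) :
    x ⬝ᵥ symPart A *ᵥ x = x ⬝ᵥ A *ᵥ x := by
  have : x ⬝ᵥ Aᵀ *ᵥ x = x ⬝ᵥ A *ᵥ x := by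
    rw [dotProduct_mulVec, vecMul_transpose, dotProduct_comm]
  rw [symPart, smul_mulVec, add_mulVec, dotProduct_smul, dotProduct_add, this, smul_eq_mul]
  ring

theorem HasDerivAt.dotProduct {u w : ℝ → m → ℝ} {u' w' : m → ℝ} {t : ℝ}
    (hu : HasDerivAt u u' t) (hw : HasDerivAt w w' t) :
    HasDerivAt (fun s => u s ⬝ᵥ w s) (u' ⬝ᵥ w t + u t ⬝ᵥ w') t := by
  have := HasDerivAt.fun_sum fun i (_ : i ∈ Finset.univ) =>
    (hasDerivAt_pi.1 hu i).fun_mul (hasDerivAt_pi.1 hw i)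
  rwa [Finset.sum_add_distrib] at this

theorem HasDerivAt.mulVec {A : ℝ → Matrix m m ℝ} {A' : Matrix m m ℝ} {u : ℝ → m → ℝ}
    {u' : m → ℝ} {t : ℝ} (hA : HasDerivAt A A' t) (hu : HasDerivAt u u' t) :
    HasDerivAt (fun s => A s *ᵥ u s) (A' *ᵥ u t + A t *ᵥ u') t :=
  hasDerivAt_pi.2 fun i => (hasDerivAt_pi.1 hA i).dotProduct hu

theorem HasDerivAt.mulVec_const {Γ : ℝ → Matrix m m ℝ} {Γ' : Matrix m m ℝ} {t : ℝ}
    (hΓ : HasDerivAt Γ Γ' t) (x : m → ℝ) : HasDerivAt (Γ · *ᵥ x) (Γ' *ᵥ x) t := by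
  simpa using hΓ.mulVec (hasDerivAt_const t x)

theorem HasDerivAt.dotProduct_mulVec_self {u : ℝ → m → ℝ} {u' : m → ℝ} {t : ℝ}
    (hu : HasDerivAt u u' t) {M : Matrix m m ℝ} (hM : Mᵀ = M) :
    HasDerivAt (fun s => u s ⬝ᵥ M *ᵥ u s) (2 * (u t ⬝ᵥ M *ᵥ u')) t := by
  have hswap : u' ⬝ᵥ M *ᵥ u t = u t ⬝ᵥ M *ᵥ u' := by
    rw [dotProduct_comm, dotProduct_mulVec, ← hM, vecMul_transpose, hM]
  convert hu.dotProduct ((hasDerivAt_const t M).mulVec hu) using 1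
  rw [zero_mulVec, zero_add, hswap]
  ring

theorem exists_lipschitzWith_mulVec {D : ℝ → Matrix m m ℝ} {s : Set ℝ} (hs : IsCompact s)
    (hD : ContinuousOn D s) : ∃ K, ∀ t ∈ s, LipschitzWith K (D t *ᵥ ·) := by
  let toCLM : Matrix m m ℝ →ₗ[ℝ] (m → ℝ) →L[ℝ] (m → ℝ) :=
    LinearMap.toContinuousLinearMap.toLinearMap ∘ₗ mulVecBilin ℝ ℝ
  obtain ⟨C, hC⟩ := hs.exists_bound_of_continuousOn
    (toCLM.continuous_of_finiteDimensional.comp_continuousOn hD)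
  refine ⟨C.toNNReal, fun t ht => (toCLM (D t)).lipschitz.weaken ?_⟩
  rw [← NNReal.coe_le_coe, coe_nnnorm]
  exact (hC t ht).trans (Real.le_coe_toNNReal C)

theorem eqOn_zero_of_hasDerivAt_mulVec_of_eq_zero_right {A : ℝ → Matrix m m ℝ} {a b : ℝ}
    (hA : ContinuousOn A (Icc a b)) {u : ℝ → m → ℝ}
    (hu : ∀ t ∈ Icc a b, HasDerivAt u (A t *ᵥ u t) t) (hb : u b = 0) :
    EqOn u 0 (Icc a b) := by
  obtain ⟨K, hK⟩ := exists_lipschitzWith_mulVec isCompact_Icc hA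
  refine ODE_solution_unique_of_mem_Icc_left (v := (A · *ᵥ ·)) (s := fun _ => univ)
    (fun t ht => (hK t (Ioc_subset_Icc_self ht)).lipschitzOnWith)
    (fun t ht => (hu t ht).continuousAt.continuousWithinAt)
    (fun t ht => (hu t (Ioc_subset_Icc_self ht)).hasDerivWithinAt) (fun _ _ => trivial)
    continuousOn_const (fun t _ => ?_) (fun _ _ => trivial) hb
  rw [Pi.zero_apply, mulVec_zero]
  exact hasDerivWithinAt_const t (Iic t) 0

theorem isUnit_of_hasDerivAt_mul [DecidableEq m] {A Γ : ℝ → Matrix m m ℝ} {a b : ℝ}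
    (hA : ContinuousOn A (Icc a b)) (hΓ : ∀ t ∈ Icc a b, HasDerivAt Γ (A t * Γ t) t)
    (hΓa : Γ a = 1) {t : ℝ} (ht : t ∈ Icc a b) : IsUnit (Γ t) := by
  rw [← mulVec_injective_iff_isUnit, ← coe_mulVecLin, injective_iff_map_eq_zero]
  intro x hx
  have hsol : ∀ s ∈ Icc a t, HasDerivAt (Γ · *ᵥ x) (A s *ᵥ (Γ s *ᵥ x)) s := fun s hs => by
    simpa [mulVec_mulVec] using (hΓ s ⟨hs.1, hs.2.trans ht.2⟩).mulVec_const x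
  simpa [hΓa] using eqOn_zero_of_hasDerivAt_mulVec_of_eq_zero_right
    (hA.mono (Icc_subset_Icc_right ht.2)) hsol hx ⟨le_rfl, ht.1⟩

theorem antitoneOn_dotProduct_mulVec_self {M : Matrix m m ℝ} (hM : Mᵀ = M)
    {D : ℝ → Matrix m m ℝ} {s : Set ℝ} (hs : Convex ℝ s)
    (hMD : ∀ t ∈ s, (symPart (M * D t)).PosSemidef) {u : ℝ → m → ℝ}
    (hu : ∀ t ∈ s, HasDerivAt u (-D t *ᵥ u t) t) :
    AntitoneOn (fun t => u t ⬝ᵥ M *ᵥ u t) s := by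
  have hderiv t (ht : t ∈ s) := (hu t ht).dotProduct_mulVec_self hM
  refine antitoneOn_of_hasDerivWithinAt_nonpos hs
    (fun t ht => (hderiv t ht).continuousAt.continuousWithinAt)
    (fun t ht => (hderiv t (interior_subset ht)).hasDerivWithinAt) fun t ht => ?_
  have hdamp := (hMD t (interior_subset ht)).dotProduct_mulVec_nonneg (u t)
  rw [star_trivial, dotProduct_symPart_mulVec, ← mulVec_mulVec] at hdamp
  rw [neg_mulVec, mulVec_neg, dotProduct_neg]
  linarith

theorem posSemidef_sub_transpose_mul_mul_of_hasDerivAt [DecidableEq m] {M : Matrix m m ℝ}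
    (hM : M.IsHermitian) {D Γ : ℝ → Matrix m m ℝ} {a b : ℝ}
    (hMD : ∀ t ∈ Icc a b, (symPart (M * D t)).PosSemidef)
    (hΓ : ∀ t ∈ Icc a b, HasDerivAt Γ (-D t * Γ t) t) (hΓa : Γ a = 1) {t : ℝ}
    (ht : t ∈ Icc a b) : (M - (Γ t)ᵀ * M * Γ t).PosSemidef := by
  have hsol x : ∀ s ∈ Icc a b, HasDerivAt (Γ · *ᵥ x) (-D s *ᵥ (Γ s *ᵥ x)) s := fun s hs => by
    simpa [mulVec_mulVec] using (hΓ s hs).mulVec_const x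
  have hMs : Mᵀ = M := isHermitian_iff_isSymm.1 hM
  rw [← conjTranspose_eq_transpose_of_trivial]
  refine .of_dotProduct_mulVec_nonneg (hM.sub (isHermitian_conjTranspose_mul_mul _ hM))
    fun x => ?_
  have hdecay := antitoneOn_dotProduct_mulVec_self hMs (convex_Icc a b) hMD (hsol x)
    ⟨le_rfl, ht.1.trans ht.2⟩ ht ht.1
  simp only [hΓa, one_mulVec] at hdecay
  have hq : star x ⬝ᵥ ((Γ t)ᴴ * M * Γ t) *ᵥ x = star (Γ t *ᵥ x) ⬝ᵥ M *ᵥ (Γ t *ᵥ x) := by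
    simp only [star_mulVec, dotProduct_mulVec, vecMul_vecMul]
  rw [sub_mulVec, dotProduct_sub, hq, star_trivial, star_trivial]
  linarith

theorem Matrix.PosSemidef.transpose_inv_mul_mul_sub [DecidableEq m] {A B : Matrix m m ℝ}
    (hB : IsUnit B) (h : (A - Bᵀ * A * B).PosSemidef) :
    ((B⁻¹)ᵀ * A * B⁻¹ - A).PosSemidef := by
  have hB' : IsUnit B.det := (isUnit_iff_isUnit_det B).1 hB
  have : (B⁻¹)ᵀ * A * B⁻¹ - A = (B⁻¹)ᴴ * (A - Bᵀ * A * B) * B⁻¹ := by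
    rw [conjTranspose_eq_transpose_of_trivial, mul_sub, sub_mul,
      show (B⁻¹)ᵀ * (Bᵀ * A * B) * B⁻¹ = (B * B⁻¹)ᵀ * A * (B * B⁻¹) by
        simp only [transpose_mul, Matrix.mul_assoc],
      mul_nonsing_inv B hB', transpose_one, Matrix.one_mul, Matrix.mul_one]
  rw [this]
  exact h.conjTranspose_mul_mul_same _

end

theorem stmt5_general {n : ℕ} (M : Matrix (Fin n) (Fin n) ℝ) (hM : M.PosDef)
    (ta tb : ℝ)
    (D : ℝ → Matrix (Fin n) (Fin n) ℝ)
    (hD : ContinuousOn D (Set.Icc ta tb))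
    (hMD : ∀ t ∈ Set.Icc ta tb, (symPart (M * D t)).PosSemidef)
    (Γ : ℝ → Matrix (Fin n) (Fin n) ℝ)
    (hΓ : ∀ t ∈ Set.Icc ta tb, HasDerivAt Γ (-(D t) * Γ t) t)
    (hΓ0 : Γ ta = 1) :
    ∀ t ∈ Set.Icc ta tb,
      IsUnit (Γ t)
      ∧ NegSemidef ((Γ t)ᵀ * M * Γ t - M)
      ∧ NegSemidef (M - ((Γ t)⁻¹)ᵀ * M * (Γ t)⁻¹) := by
  intro t ht
  have hunit : IsUnit (Γ t) := isUnit_of_hasDerivAt_mul hD.neg hΓ hΓ0 ht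
  have hdecay := posSemidef_sub_transpose_mul_mul_of_hasDerivAt hM.isHermitian hMD hΓ hΓ0 ht
  refine ⟨hunit, ?_, ?_⟩ <;> rw [negSemidef_iff_posSemidef_neg, neg_sub]
  · exact hdecay
  · exact hdecay.transpose_inv_mul_mul_sub hunit

/-- damping lemma: if `M ≻ 0`, `sym(MD(t)) ⪰ 0` on `[ta, tb]`, and
`Γ' = −DΓ`, `Γ(ta) = I`, then `Γ(t)` is invertible and both
`Γ(t)ᵀMΓ(t) − M ⪯ 0` and `M − Γ(t)⁻ᵀMΓ(t)⁻¹ ⪯ 0`. -/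
theorem stmt5 {n : ℕ} (M : Matrix (Fin n) (Fin n) ℝ) (hM : M.PosDef)
    (ta tb : ℝ) (hab : ta ≤ tb)
    (D : ℝ → Matrix (Fin n) (Fin n) ℝ)
    (hD : ContinuousOn D (Set.Icc ta tb))
    (hMD : ∀ t ∈ Set.Icc ta tb, (symPart (M * D t)).PosSemidef)
    (Γ : ℝ → Matrix (Fin n) (Fin n) ℝ)
    (hΓ : ∀ t ∈ Set.Icc ta tb, HasDerivAt Γ (-(D t) * Γ t) t)
    (hΓ0 : Γ ta = 1) :
    ∀ t ∈ Set.Icc ta tb,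
      IsUnit (Γ t)
      ∧ NegSemidef ((Γ t)ᵀ * M * Γ t - M)
      ∧ NegSemidef (M - ((Γ t)⁻¹)ᵀ * M * (Γ t)⁻¹) :=
  stmt5_general M hM ta tb D hD hMD Γ hΓ hΓ0
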